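/- Let ℓ ≥ a ≥ b ≥ c ≥ d ≥ 0 be integers with a + b + c + d = 2(ℓ + s), s > 0, a + d < b + c, a < ℓ, and d > s. Then max{0, (1+d−s)s} < max{0, (ℓ+1−d)(d+s)/2}; in particular the sp-degree strictly exceeds the sl₂-degree. -/
import Mathlib


theorem stmt_9 (a b c d ℓ s : ℤ)
    (hd : 0 ≤ d) (hdc : d ≤ c) (hcb : c ≤ b) (hba : b ≤ a) (hal : a ≤ ℓ)
    (hsum : a + b + c + d = 2 * (ℓ + s)) (hs : 0 < s)
    (hbc : a + d < b + c) (haℓ : a < ℓ) (hds : d > s) :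
    max 0 ((1 + d - s) * s) < max 0 ((ℓ + 1 - d) * (d + s) / 2) := by
  have hl : 2 * d ≤ ℓ + s := by linarith
  have hX : 2 * ((1 + d - s) * s + 1) ≤ (ℓ + 1 - d) * (d + s) := by nlinarith
  have hdiv : (1 + d - s) * s + 1 ≤ (ℓ + 1 - d) * (d + s) / 2 := by
    rw [Int.le_ediv_iff_mul_le (by norm_num)]
    linarith
  have hk : 0 < (1 + d - s) * s := mul_pos (by linarith) hs
  have h1 : max 0 ((1 + d - s) * s) = (1 + d - s) * s := max_eq_right hk.le
  rw [h1]
  calc (1 + d - s) * s < (1 + d - s) * s + 1 := by linarith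
    _ ≤ (ℓ + 1 - d) * (d + s) / 2 := hdiv
    _ ≤ max 0 ((ℓ + 1 - d) * (d + s) / 2) := le_max_right _ _
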